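/- arXiv:1408.1685 — 2 statements merged into one kernel-verified Lean document; each statement's English description precedes it below -/
import Mathlib

section
/- Consider the real vector space W ⊕ W* with W := ℝ², equipped with the quadratic form Q(w, θ) := θ(w) (a nondegenerate form of split signature (2,2) up to sign conventions). Let the exterior algebra Λ(W) act as a module over the Clifford algebra Cl(W ⊕ W*, Q) via (w, θ) · ω := w ∧ ω + ι_θ ω (wedge with w plus contraction by θ). Then for every nonzero ω in the even part Λ⁰(W) ⊕ Λ²(W), the annihilator {v ∈ W ⊕ W* : v · ω = 0} is a 2-dimensional (hence maximal) totally isotropic subspace of W ⊕ W*. -/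
/-- Purity of nonzero even half-spinors in signature `(2,2)`: in the model `W ⊕ W*` with
`W = ℝ²`, `Q(w,θ) = θ(w)`, and the Clifford action `(w,θ)·ω = w ∧ ω + ι_θ ω` on
`Λ(W) ≅ ℝ⁴` (coordinates `(a, b₁, b₂, c)` for `a·1 + b₁e₁ + b₂e₂ + c·e₁∧e₂`), the
annihilator of every nonzero even element `ω = a·1 + c·e₁∧e₂` is a 2-dimensional totally
isotropic subspace of `W ⊕ W*`. -/
theorem even_halfspinor_pure_signature_two_two
    (act : ((ℝ × ℝ) × (ℝ × ℝ)) → (ℝ × ℝ × ℝ × ℝ) → (ℝ × ℝ × ℝ × ℝ))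
    (hact : ∀ v ω, act v ω =
      (v.2.1 * ω.2.1 + v.2.2 * ω.2.2.1,
       v.1.1 * ω.1 - v.2.2 * ω.2.2.2,
       v.1.2 * ω.1 + v.2.1 * ω.2.2.2,
       -v.1.2 * ω.2.1 + v.1.1 * ω.2.2.1))
    (Q : ((ℝ × ℝ) × (ℝ × ℝ)) → ℝ)
    (hQ : ∀ v, Q v = v.2.1 * v.1.1 + v.2.2 * v.1.2)
    (a c : ℝ) (hω : ¬(a = 0 ∧ c = 0)) :
    ∃ S : Submodule ℝ ((ℝ × ℝ) × (ℝ × ℝ)),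
      (∀ v, v ∈ S ↔ act v (a, 0, 0, c) = 0) ∧
      Module.finrank ℝ ↥S = 2 ∧
      (∀ u ∈ S, ∀ v ∈ S, u.2.1 * v.1.1 + u.2.2 * v.1.2 + v.2.1 * u.1.1 + v.2.2 * u.1.2 = 0) ∧
      (∀ u ∈ S, Q u = 0) := by
  set L : ((ℝ × ℝ) × (ℝ × ℝ)) →ₗ[ℝ] ℝ × ℝ :=
    { toFun := fun v => (v.1.1 * a - v.2.2 * c, v.1.2 * a + v.2.1 * c)
      map_add' := by intro u v; simp [Prod.ext_iff]; constructor <;> ring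
      map_smul' := by intro r v; simp [Prod.ext_iff, smul_eq_mul]; constructor <;> ring }
    with hL
  have hLdef : ∀ v : ((ℝ × ℝ) × (ℝ × ℝ)),
      L v = (v.1.1 * a - v.2.2 * c, v.1.2 * a + v.2.1 * c) := fun v => rfl
  -- membership characterization
  have hmem : ∀ v, v ∈ LinearMap.ker L ↔ act v (a, 0, 0, c) = 0 := by
    intro v
    rw [LinearMap.mem_ker, hact, hLdef, Prod.ext_iff, Prod.ext_iff, Prod.ext_iff, Prod.ext_iff]
    simp only [Prod.fst_zero, Prod.snd_zero]
    constructor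
    · rintro ⟨h1, h2⟩
      refine ⟨by ring, h1, h2, by ring⟩
    · rintro ⟨_, h1, h2, _⟩
      exact ⟨h1, h2⟩
  -- surjectivity
  have hsurj : Function.Surjective L := by
    intro p
    rcases not_and_or.mp hω with ha | hc
    · exact ⟨((p.1 / a, p.2 / a), (0, 0)), by
        rw [hLdef, Prod.ext_iff]; constructor <;> (simp; field_simp)⟩
    · exact ⟨((0, 0), (p.2 / c, -(p.1 / c))), by
        rw [hLdef, Prod.ext_iff]; constructor <;> (simp; field_simp)⟩
  have hrank : Module.finrank ℝ ↥(LinearMap.ker L) = 2 := by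
    have h := LinearMap.finrank_range_add_finrank_ker L
    have hr : LinearMap.range L = ⊤ := LinearMap.range_eq_top.mpr hsurj
    rw [hr] at h
    have hdom : Module.finrank ℝ (((ℝ × ℝ) × (ℝ × ℝ))) = 4 := by
      simp [Module.finrank_prod, Module.finrank_self]
    have htop : Module.finrank ℝ (⊤ : Submodule ℝ (ℝ × ℝ)) = 2 := by
      simp [finrank_top, Module.finrank_prod]
    omega
  -- isotropy helper
  have hiso : ∀ u ∈ LinearMap.ker L, u.2.1 * u.1.1 + u.2.2 * u.1.2 = 0 := by
    intro u hu
    rw [LinearMap.mem_ker, hLdef, Prod.ext_iff] at hu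
    obtain ⟨h1, h2⟩ := hu
    simp only [Prod.fst_zero, Prod.snd_zero] at h1 h2
    rcases not_and_or.mp hω with ha | hc
    · have : a * (u.2.1 * u.1.1 + u.2.2 * u.1.2) = 0 := by
        linear_combination u.2.1 * h1 + u.2.2 * h2
      exact (mul_eq_zero.mp this).resolve_left ha
    · have : c * (u.2.1 * u.1.1 + u.2.2 * u.1.2) = 0 := by
        linear_combination (-u.1.2) * h1 + u.1.1 * h2
      exact (mul_eq_zero.mp this).resolve_left hc
  refine ⟨LinearMap.ker L, hmem, hrank, ?_, ?_⟩
  · intro u hu v hv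
    have huv := hiso (u + v) (add_mem hu hv)
    have h1 := hiso u hu
    have h2 := hiso v hv
    simp only [Prod.fst_add, Prod.snd_add] at huv
    nlinarith [huv, h1, h2]
  · intro u hu
    rw [hQ]
    exact hiso u hu
end

section
/- Let (M, g) be a pseudo-Riemannian manifold of dimension n ≥ 3 with Levi-Civita connection ∇^g and Schouten tensor K^g := (1/(n−2))(scal^g/(2(n−1)) · g − Ric^g), and let K^g(X)^♯ denote the vector field g-dual to K^g(X, ·). On the bundle T := ℝ ⊕ TM ⊕ ℝ (trivial line bundles in the first and third slots) define the covariant derivative ∇ by ∇_X (α, Y, β) := ( X(α) + K^g(X, Y), ∇^g_X Y + α X − β K^g(X)^♯, X(β) − g(X, Y) ). Suppose L ⊂ TM is a totally lightlike distribution such that (i) L is ∇^g-parallel (∇^g_X Y ∈ Γ(L) for all X ∈ 𝔛(M), Y ∈ Γ(L)) and (ii) K^g(X)^♯ ∈ Γ(L) for all X ∈ 𝔛(M). Then the subbundle H := {(0, Y, β) : Y ∈ L, β ∈ ℝ} ⊂ T is ∇-parallel, i.e. ∇_X s ∈ Γ(H) for every s ∈ Γ(H) and X ∈ 𝔛(M).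 -/
/-- Converse direction of the main theorem, in the metric splitting of the standard tractor
bundle. Sections of the tangent bundle are modelled abstractly as a module `X` over the ring
`R` of functions, with metric `g`, Levi-Civita connection `∇g`, directional derivative `D` of
functions, and Schouten endomorphism `K` (so `K^g(X,Y) = g(K X, Y)` and `K^g(X)^♯ = K X`).
If the totally lightlike distribution `L` is `∇g`-parallel and `K` maps into `L`, then the
tractor distribution `H = {(0, Y, β) : Y ∈ L}` is parallel for the tractor connection
`∇_x (α, Y, β) = (D x α + g (K x) Y, ∇g x Y + α • x - β • K x, D x β - g x Y)`. -/
theorem tractor_distribution_parallel_of_parallel_lightlike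
    {R : Type*} [CommRing R] {X : Type*} [AddCommGroup X] [Module R X]
    (g : X →ₗ[R] X →ₗ[R] R) (hsymm : ∀ x y, g x y = g y x)
    (D : X → R → R) (hD : ∀ x, D x 0 = 0)
    (nablag : X → X → X)
    (K : X → X)
    (L : Submodule R X)
    (hiso : ∀ u ∈ L, ∀ v ∈ L, g u v = 0)
    (hpar : ∀ x : X, ∀ y ∈ L, nablag x y ∈ L)
    (hKL : ∀ x : X, K x ∈ L)
    (nabla : X → (R × X × R) → (R × X × R))
    (hnabla : ∀ x : X, ∀ s : R × X × R,
      nabla x s = (D x s.1 + g (K x) s.2.1,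
                   nablag x s.2.1 + s.1 • x - s.2.2 • K x,
                   D x s.2.2 - g x s.2.1)) :
    ∀ x : X, ∀ s : R × X × R, s.1 = 0 ∧ s.2.1 ∈ L →
      (nabla x s).1 = 0 ∧ (nabla x s).2.1 ∈ L := by
  intro x s ⟨h1, h2⟩
  rw [hnabla]
  constructor
  · simp [h1, hD, hiso _ (hKL x) _ h2]
  · simp only [h1, zero_smul, add_zero]
    exact sub_mem (hpar x _ h2) (Submodule.smul_mem _ _ (hKL x))
end
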